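/- Let G be an Eulerian digraph in which every node has in-degree 2 and out-degree 2, let P be the 0/1-circulation polytope of G, let 0 ∈ P be the zero flow, and let 1 ∈ P be the full flow. Then there exists a list ((g_1,λ_1),(g_2,λ_2)) that is simultaneously a circuit walk of length 2 from 0 to 1 and a sign-compatible circuit decomposition of 1 − 0 if and only if G decomposes into two simple Hamiltonian dicycles. -/

import Mathlib

open Matrix

/-- `g` is a circuit of the polyhedron `{x : A x = b, B x ≤ d}` with respect to the
description `(A, B)`: a nonzero element of `ker A` with coprime integral components such that
`B g` is support-minimal among `{B x : x ∈ ker A, x ≠ 0}`. -/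
def IsCircuit {mA mB n : Type*} [Fintype n]
    (A : Matrix mA n ℝ) (B : Matrix mB n ℝ) (g : n → ℝ) : Prop :=
  A.mulVec g = 0 ∧ g ≠ 0 ∧
  (∃ z : n → ℤ, (∀ i, (z i : ℝ) = g i) ∧ Finset.univ.gcd z = 1) ∧
  ∀ x : n → ℝ, A.mulVec x = 0 → x ≠ 0 →
    ¬ (Function.support (B.mulVec x) ⊂ Function.support (B.mulVec g))

/-- Membership in the polyhedron `{x : A x = b, B x ≤ d}`. -/
def InPoly {mA mB n : Type*} [Fintype n] (A : Matrix mA n ℝ) (b : mA → ℝ)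
    (B : Matrix mB n ℝ) (d : mB → ℝ) (x : n → ℝ) : Prop :=
  A.mulVec x = b ∧ B.mulVec x ≤ d

/-- `((g 0, lam 0), …, (g (r-1), lam (r-1)))` is a (maximal) circuit walk from `x` to `y`
in the polyhedron `{x : A x = b, B x ≤ d}`. -/
def IsCircuitWalk {mA mB n : Type*} [Fintype n]
    (A : Matrix mA n ℝ) (b : mA → ℝ) (B : Matrix mB n ℝ) (d : mB → ℝ)
    (x y : n → ℝ) (r : ℕ) (g : Fin r → n → ℝ) (lam : Fin r → ℝ) : Prop :=
  (∀ i, IsCircuit A B (g i)) ∧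
  (∀ i, 0 < lam i) ∧
  (∀ k : Fin r, InPoly A b B d (x + ∑ i ∈ Finset.univ.filter (fun i => i ≤ k), lam i • g i)) ∧
  (x + ∑ i, lam i • g i = y) ∧
  (∀ k : Fin r, ∀ mu : ℝ, lam k < mu →
    ¬ InPoly A b B d ((x + ∑ i ∈ Finset.univ.filter (fun i => i < k), lam i • g i) + mu • g k))

/-- `u` and `u'` are sign-compatible with respect to `B`. -/
def SignCompat {mB n : Type*} [Fintype n] (B : Matrix mB n ℝ) (u u' : n → ℝ) : Prop :=
  ∀ i, 0 ≤ B.mulVec u i * B.mulVec u' i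

/-- Sign-compatible circuit decomposition of the vector `u` with respect to `(A, B)`. -/
def IsSCDecomp {mA mB n : Type*} [Fintype n]
    (A : Matrix mA n ℝ) (B : Matrix mB n ℝ) (u : n → ℝ)
    (r : ℕ) (g : Fin r → n → ℝ) (lam : Fin r → ℝ) : Prop :=
  (∀ i, IsCircuit A B (g i)) ∧ (∀ i, 0 < lam i) ∧ (∑ i, lam i • g i = u) ∧
  ∀ i j, SignCompat B (g i) (g j)

/-- A loopless digraph with node type `N` and arc type `α`. -/
structure Digraph' (N α : Type*) where
  src : α → N
  dst : α → N
  loopless : ∀ a, src a ≠ dst a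

/-- The node-arc incidence matrix of a digraph. -/
def incMat {N α : Type*} [DecidableEq N] (G : Digraph' N α) : Matrix N α ℝ :=
  Matrix.of fun v a => if G.src a = v then 1 else if G.dst a = v then -1 else 0

/-- The inequality system `x ≤ 1`-style box constraints: rows of the identity followed by
rows of the negative identity. -/
def boxB (α : Type*) [DecidableEq α] : Matrix (α ⊕ α) α ℝ :=
  Matrix.fromRows 1 (-1)

/-- Right-hand side for the box constraints `x ≤ 1`, `-x ≤ 0` of the 0/1-circulation polytope. -/
def boxd (α : Type*) : α ⊕ α → ℝ := Sum.elim (fun _ => 1) (fun _ => 0)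

/-- In-degree of a node. -/
def inDeg {N α : Type*} [Fintype α] [DecidableEq N] (G : Digraph' N α) (v : N) : ℕ :=
  (Finset.univ.filter fun a => G.dst a = v).card

/-- Out-degree of a node. -/
def outDeg {N α : Type*} [Fintype α] [DecidableEq N] (G : Digraph' N α) (v : N) : ℕ :=
  (Finset.univ.filter fun a => G.src a = v).card

/-- `S` is the arc set of a simple dicycle of `G` (a directed cycle with no repeated nodes). -/
def IsSimpleDicycle {N α : Type*} (G : Digraph' N α) (S : Set α) : Prop :=
  ∃ (k : ℕ) (e : Fin (k+1) → α) (v : Fin (k+1) → N),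
    Function.Injective e ∧ Function.Injective v ∧ S = Set.range e ∧
    ∀ i, G.src (e i) = v i ∧ G.dst (e i) = v (i + 1)

/-- `S` is the arc set of a simple Hamiltonian dicycle of `G`. -/
def IsHamiltonianDicycle {N α : Type*} (G : Digraph' N α) (S : Set α) : Prop :=
  ∃ (k : ℕ) (e : Fin (k+1) → α) (v : Fin (k+1) → N),
    Function.Injective e ∧ Function.Bijective v ∧ S = Set.range e ∧
    ∀ i, G.src (e i) = v i ∧ G.dst (e i) = v (i + 1)

/-- `G` decomposes into two simple Hamiltonian dicycles. -/
def DecompTwoHamiltonian {N α : Type*} (G : Digraph' N α) : Prop :=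
  ∃ S₁ S₂ : Set α, IsHamiltonianDicycle G S₁ ∧ IsHamiltonianDicycle G S₂ ∧
    Disjoint S₁ S₂ ∧ S₁ ∪ S₂ = Set.univ

/-!
Over the box `0 ≤ x ≤ 1`, the nonnegative circuits of the circulation polytope are exactly the
indicator vectors `1_S` of simple dicycles `S`: a nonnegative circulation has a simple dicycle
in its support, support-minimality makes the support equal to it, flow conservation makes the
circuit constant along it, and coprimality makes that constant `1`.

A circuit walk `0 → 1` of length two starts with a nonnegative step `λ₀ 1_S`, maximal only for
`λ₀ = 1`; then `1 - 1_S = λ₁ 1_T` forces `T = Sᶜ`. Conversely, complementary simple dicycles `S`,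
`Sᶜ` give such a walk, and it is a sign-compatible decomposition since both steps are
nonnegative. When every node has out-degree two, a simple dicycle whose complement is also one
passes through every node, because neither uses two arcs leaving the same node.
-/

open Function Set

theorem eq_compl_of_indicator_add_smul_indicator_eq_one {α : Type*} {S T : Set α} {c : ℝ}
    (hT : T.Nonempty) (hc : 0 < c) (h : S.indicator 1 + c • T.indicator 1 = (1 : α → ℝ)) :
    T = Sᶜ := by
  obtain ⟨t, ht⟩ := hT
  have hc1 : c = 1 := by
    have := congrFun h t
    by_cases hts : t ∈ S <;> simp [hts, ht] at this <;> linarith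
  ext a
  have := congrFun h a
  by_cases has : a ∈ S <;> by_cases hat : a ∈ T <;> simp [has, hat, hc1] at this ⊢

section Box

variable {α : Type*} [Fintype α] [DecidableEq α]

theorem boxB_mulVec (x : α → ℝ) : boxB α *ᵥ x = Sum.elim x (-x) := by
  rw [boxB, fromRows_mulVec, one_mulVec, neg_mulVec, one_mulVec]

theorem support_boxB_mulVec_subset_iff {x y : α → ℝ} :
    support (boxB α *ᵥ x) ⊆ support (boxB α *ᵥ y) ↔ support x ⊆ support y := by
  simp only [boxB_mulVec, subset_def, Sum.forall, mem_support, Sum.elim_inl, Sum.elim_inr,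
    Pi.neg_apply, ne_eq, neg_eq_zero, and_self]

theorem support_boxB_mulVec_ssubset_iff {x y : α → ℝ} :
    support (boxB α *ᵥ x) ⊂ support (boxB α *ᵥ y) ↔ support x ⊂ support y := by
  simp only [ssubset_def, support_boxB_mulVec_subset_iff]

theorem signCompat_boxB_of_nonneg {u u' : α → ℝ} (hu : 0 ≤ u) (hu' : 0 ≤ u') :
    SignCompat (boxB α) u u' := by
  rintro (a | a)
  · simpa [boxB_mulVec] using mul_nonneg (hu a) (hu' a)
  · simpa [boxB_mulVec] using mul_nonneg (hu a) (hu' a)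

end Box

theorem isCircuitWalk_two_zero_iff {mA mB n : Type*} [Fintype n] {A : Matrix mA n ℝ}
    {b : mA → ℝ} {B : Matrix mB n ℝ} {d : mB → ℝ} {y : n → ℝ} {g : Fin 2 → n → ℝ}
    {lam : Fin 2 → ℝ} :
    IsCircuitWalk A b B d 0 y 2 g lam ↔
      (∀ i, IsCircuit A B (g i)) ∧ (∀ i, 0 < lam i) ∧
      InPoly A b B d (lam 0 • g 0) ∧ InPoly A b B d (lam 0 • g 0 + lam 1 • g 1) ∧
      lam 0 • g 0 + lam 1 • g 1 = y ∧
      (∀ mu, lam 0 < mu → ¬ InPoly A b B d (mu • g 0)) ∧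
      (∀ mu, lam 1 < mu → ¬ InPoly A b B d (lam 0 • g 0 + mu • g 1)) := by
  have hle0 : Finset.univ.filter (fun i : Fin 2 => i ≤ 0) = {0} := by decide
  have hle1 : Finset.univ.filter (fun i : Fin 2 => i ≤ 1) = Finset.univ := by decide
  have hlt0 : Finset.univ.filter (fun i : Fin 2 => i < 0) = ∅ := by decide
  have hlt1 : Finset.univ.filter (fun i : Fin 2 => i < 1) = {0} := by decide
  simp only [IsCircuitWalk, Fin.forall_fin_two, hle0, hle1, hlt0, hlt1, Finset.sum_singleton,
    Finset.sum_empty, Fin.sum_univ_two, zero_add, and_assoc]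

section Circulation

variable {N α : Type*} [DecidableEq N] [Fintype α] {G : Digraph' N α}

theorem incMat_mulVec_apply (G : Digraph' N α) (x : α → ℝ) (w : N) :
    (incMat G *ᵥ x) w =
      ∑ a ∈ Finset.univ.filter (G.src · = w), x a -
        ∑ a ∈ Finset.univ.filter (G.dst · = w), x a := by
  rw [Finset.sum_filter, Finset.sum_filter, ← Finset.sum_sub_distrib]
  refine Finset.sum_congr rfl fun a _ => ?_
  by_cases hs : G.src a = w
  · have hd : G.dst a ≠ w := hs ▸ (G.loopless a).symm
    simp [incMat, hs, hd]
  · by_cases hd : G.dst a = w <;> simp [incMat, hs, hd]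

theorem inPoly_circulation_iff [DecidableEq α] {x : α → ℝ} :
    InPoly (incMat G) 0 (boxB α) (boxd α) x ↔ incMat G *ᵥ x = 0 ∧ 0 ≤ x ∧ x ≤ 1 := by
  simp only [InPoly, boxB_mulVec, Pi.le_def, Sum.forall, Sum.elim_inl, Sum.elim_inr, boxd,
    Pi.neg_apply, neg_nonpos, Pi.zero_apply, Pi.one_apply]
  tauto

theorem exists_succ_of_mem_ker_of_nonneg {g : α → ℝ} (hker : incMat G *ᵥ g = 0) (hnn : 0 ≤ g)
    {a : α} (ha : 0 < g a) : ∃ b, G.src b = G.dst a ∧ 0 < g b := by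
  have hbal := incMat_mulVec_apply G g (G.dst a)
  rw [hker, Pi.zero_apply, eq_comm, sub_eq_zero] at hbal
  have hin : g a ≤ ∑ b ∈ Finset.univ.filter (G.dst · = G.dst a), g b :=
    Finset.single_le_sum (fun b _ => hnn b) (by simp)
  have hout : ∑ b ∈ Finset.univ.filter (G.src · = G.dst a), (0 : α → ℝ) b <
      ∑ b ∈ Finset.univ.filter (G.src · = G.dst a), g b := by
    simp only [Pi.zero_apply, Finset.sum_const_zero]; linarith
  obtain ⟨b, hb, hpos⟩ := Finset.exists_lt_of_sum_lt hout
  exact ⟨b, (Finset.mem_filter.1 hb).2, hpos⟩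

theorem not_inPoly_of_one_lt_apply [DecidableEq α] {x : α → ℝ} {a : α} (ha : 1 < x a) :
    ¬ InPoly (incMat G) 0 (boxB α) (boxd α) x :=
  fun hx => (inPoly_circulation_iff.1 hx).2.2 a |>.not_gt ha

end Circulation

theorem Function.exists_mem_periodicPts {β : Type*} [Finite β] [Nonempty β] (f : β → β) :
    ∃ y, y ∈ periodicPts f := by
  obtain ⟨m, n, hmn, hmn'⟩ :=
    Finite.exists_ne_map_eq_of_infinite fun n => f^[n] (Classical.arbitrary β)
  wlog hlt : m < n generalizing m n
  · exact this n m hmn.symm hmn'.symm (lt_of_le_of_ne (not_lt.1 hlt) hmn.symm)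
  refine ⟨f^[m] (Classical.arbitrary β), n - m, Nat.sub_pos_of_lt hlt, ?_⟩
  rw [IsPeriodicPt, IsFixedPt, ← iterate_add_apply, Nat.sub_add_cancel hlt.le, hmn']

section Dicycle

variable {N α : Type*} {G : Digraph' N α}

theorem IsHamiltonianDicycle.isSimpleDicycle {S : Set α} (h : IsHamiltonianDicycle G S) :
    IsSimpleDicycle G S :=
  let ⟨k, e, v, he, hv, hS, hev⟩ := h
  ⟨k, e, v, he, hv.injective, hS, hev⟩

/-- Choosing a successor arc for every node met by `T` gives a self-map of those nodes; a
periodic orbit of it traces the dicycle. -/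
theorem exists_isSimpleDicycle_subset [Finite α] {T : Set α} (hT : T.Nonempty)
    (hsucc : ∀ a ∈ T, ∃ b ∈ T, G.src b = G.dst a) : ∃ S ⊆ T, IsSimpleDicycle G S := by
  choose out houtT hsrc using fun w : G.src '' T => w.2
  let nxt : G.src '' T → G.src '' T := fun w =>
    ⟨G.dst (out w), let ⟨b, hb, hbs⟩ := hsucc _ (houtT w); ⟨b, hb, hbs⟩⟩
  have : Nonempty (G.src '' T) := (hT.image _).to_subtype
  obtain ⟨y, hy⟩ := exists_mem_periodicPts nxt
  obtain ⟨k, hk⟩ := Nat.exists_eq_succ_of_ne_zero (minimalPeriod_pos_of_mem_periodicPts hy).ne'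
  let v : Fin (k + 1) → N := fun i => (nxt^[i] y).1
  have hv : Injective v := fun i j hij => Fin.ext <|
    iterate_injOn_Iio_minimalPeriod (hk ▸ i.2 : (i : ℕ) < _) (hk ▸ j.2 : (j : ℕ) < _)
      (Subtype.ext hij)
  have hev : ∀ i : Fin (k + 1),
      G.src (out (nxt^[i] y)) = v i ∧ G.dst (out (nxt^[i] y)) = v (i + 1) := by
    refine fun i => ⟨hsrc _, ?_⟩
    show (nxt (nxt^[i] y)).1 = (nxt^[(i + 1 : Fin (k + 1))] y).1
    rw [← iterate_succ_apply' nxt, ← iterate_mod_minimalPeriod_eq, hk, Fin.val_add_one]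
    split_ifs with h
    · rw [h, Fin.val_last, Nat.mod_self, iterate_zero_apply]
    · rw [Nat.mod_eq_of_lt (Nat.succ_lt_succ (Fin.val_lt_last h))]
  refine ⟨range fun i => out (nxt^[(i : Fin (k + 1))] y), range_subset_iff.2 fun i => houtT _,
    k, _, v, fun i j hij => hv ?_, hv, rfl, hev⟩
  rw [← (hev i).1, ← (hev j).1, hij]

namespace IsSimpleDicycle

variable {S : Set α}

theorem nonempty (hS : IsSimpleDicycle G S) : S.Nonempty :=
  let ⟨_, e, _, _, _, hS, _⟩ := hS
  hS ▸ range_nonempty e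

theorem injOn_src (hS : IsSimpleDicycle G S) : InjOn G.src S := by
  obtain ⟨k, e, v, -, hv, rfl, hev⟩ := hS
  rintro _ ⟨i, rfl⟩ _ ⟨j, rfl⟩ hij
  exact congrArg e (hv ((hev i).1.symm.trans (hij.trans (hev j).1)))

end IsSimpleDicycle

end Dicycle

section DicycleFlow

variable {N α : Type*} [DecidableEq N] [Fintype α] {G : Digraph' N α}

theorem incMat_mulVec_apply_eq_zero {x : α → ℝ} {w : N}
    (hw : ∀ a ∈ support x, G.src a ≠ w ∧ G.dst a ≠ w) : (incMat G *ᵥ x) w = 0 := by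
  refine Finset.sum_eq_zero fun a _ => ?_
  by_cases ha : x a = 0
  · simp [ha]
  · simp [incMat, hw a ha]

theorem incMat_mulVec_apply_dicycle_node {k : ℕ} {e : Fin (k + 1) → α} {v : Fin (k + 1) → N}
    (hv : Injective v) (hev : ∀ i, G.src (e i) = v i ∧ G.dst (e i) = v (i + 1))
    {x : α → ℝ} (hx : support x ⊆ range e) (i : Fin (k + 1)) :
    (incMat G *ᵥ x) (v (i + 1)) = x (e (i + 1)) - x (e i) := by
  rw [incMat_mulVec_apply]
  congr 1
  · refine Finset.sum_eq_single_of_mem _ (by simp [(hev _).1]) fun b hb hne => ?_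
    by_contra hb'
    obtain ⟨j, rfl⟩ := hx hb'
    exact hne (congrArg e (hv ((hev j).1.symm.trans (Finset.mem_filter.1 hb).2)))
  · refine Finset.sum_eq_single_of_mem _ (by simp [(hev _).2]) fun b hb hne => ?_
    by_contra hb'
    obtain ⟨j, rfl⟩ := hx hb'
    exact hne (congrArg e (add_right_cancel (hv ((hev j).2.symm.trans (Finset.mem_filter.1 hb).2))))

namespace IsSimpleDicycle

variable {S : Set α}

theorem incMat_mulVec_indicator (hS : IsSimpleDicycle G S) : incMat G *ᵥ S.indicator 1 = 0 := by
  obtain ⟨k, e, v, -, hv, rfl, hev⟩ := hS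
  have hsupp : support ((range e).indicator (1 : α → ℝ)) = range e := by
    simp [support_indicator]
  funext w
  by_cases hw : w ∈ range v
  · obtain ⟨j, rfl⟩ := hw
    rw [← sub_add_cancel j 1, incMat_mulVec_apply_dicycle_node hv hev hsupp.le,
      indicator_of_mem (mem_range_self _), indicator_of_mem (mem_range_self _)]
    simp
  · refine incMat_mulVec_apply_eq_zero fun a ha => ?_
    obtain ⟨i, rfl⟩ := hsupp.le ha
    exact ⟨(hev i).1 ▸ fun h => hw ⟨i, h⟩, (hev i).2 ▸ fun h => hw ⟨i + 1, h⟩⟩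

theorem eq_of_mem_ker (hS : IsSimpleDicycle G S) {x : α → ℝ} (hx : support x ⊆ S)
    (hker : incMat G *ᵥ x = 0) {a b : α} (ha : a ∈ S) (hb : b ∈ S) : x a = x b := by
  obtain ⟨k, e, v, -, hv, rfl, hev⟩ := hS
  have hconst : ∀ i, x (e i) = x (e 0) := by
    refine Fin.induction rfl fun i ih => ?_
    have hbal := incMat_mulVec_apply_dicycle_node hv hev hx i.castSucc
    rw [hker, Fin.coeSucc_eq_succ, Pi.zero_apply, eq_comm, sub_eq_zero] at hbal
    rw [hbal, ih]
  obtain ⟨⟨i, rfl⟩, ⟨j, rfl⟩⟩ := And.intro ha hb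
  rw [hconst i, hconst j]

theorem inPoly_indicator [DecidableEq α] (hS : IsSimpleDicycle G S) :
    InPoly (incMat G) 0 (boxB α) (boxd α) (S.indicator 1) :=
  inPoly_circulation_iff.2 ⟨hS.incMat_mulVec_indicator, fun _ => indicator_nonneg (by simp) _,
    fun _ => indicator_le_self' (by simp) _⟩

theorem isCircuit_indicator [DecidableEq α] (hS : IsSimpleDicycle G S) :
    IsCircuit (incMat G) (boxB α) (S.indicator 1) := by
  obtain ⟨a₀, ha₀⟩ := hS.nonempty
  have hsupp : support (S.indicator (1 : α → ℝ)) = S := by simp [support_indicator]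
  refine ⟨hS.incMat_mulVec_indicator, fun h => by simpa [ha₀] using congrFun h a₀,
    ⟨S.indicator 1, fun a => by by_cases ha : a ∈ S <;> simp [ha], ?_⟩, fun x hker hx hss => ?_⟩
  · refine Int.eq_one_of_dvd_one (Int.nonneg_of_normalize_eq_self Finset.normalize_gcd) ?_
    simpa [ha₀] using Finset.gcd_dvd (Finset.mem_univ a₀) (f := S.indicator (1 : α → ℤ))
  rw [support_boxB_mulVec_ssubset_iff, hsupp] at hss
  obtain ⟨a, ha, hxa⟩ := exists_of_ssubset hss
  refine hx (funext fun b => ?_)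
  by_cases hb : b ∈ S
  · rw [hS.eq_of_mem_ker hss.le hker hb ha]
    exact notMem_support.1 hxa
  · exact notMem_support.1 fun h => hb (hss.le h)

theorem isHamiltonianDicycle_of_compl (hS : IsSimpleDicycle G S) (hSc : IsSimpleDicycle G Sᶜ)
    (hout : ∀ w, 1 < outDeg G w) : IsHamiltonianDicycle G S := by
  obtain ⟨k, e, v, he, hv, rfl, hev⟩ := id hS
  refine ⟨k, e, v, he, ⟨hv, fun w => ?_⟩, rfl, hev⟩
  obtain ⟨a, ha, b, hb, hab⟩ := Finset.one_lt_card.1 (hout w)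
  rw [Finset.mem_filter] at ha hb
  have hcover : a ∈ range e ∨ b ∈ range e := by
    by_contra! h
    exact hab (hSc.injOn_src h.1 h.2 (ha.2.trans hb.2.symm))
  obtain ⟨i, rfl⟩ | ⟨i, rfl⟩ := hcover
  · exact ⟨i, (hev i).1.symm.trans ha.2⟩
  · exact ⟨i, (hev i).1.symm.trans hb.2⟩

end IsSimpleDicycle

theorem IsCircuit.exists_isSimpleDicycle_eq_indicator [DecidableEq α] {g : α → ℝ}
    (hg : IsCircuit (incMat G) (boxB α) g) (hnn : 0 ≤ g) :
    ∃ S, IsSimpleDicycle G S ∧ g = S.indicator 1 := by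
  obtain ⟨hker, hne, ⟨z, hz, hgcd⟩, hmin⟩ := hg
  have hpos : ∀ a ∈ support g, 0 < g a := fun a ha => (hnn a).lt_of_ne' ha
  obtain ⟨S, hSg, hS⟩ := exists_isSimpleDicycle_subset (G := G) (support_nonempty_iff.2 hne)
    fun a ha => let ⟨b, hb, hgb⟩ := exists_succ_of_mem_ker_of_nonneg hker hnn (hpos a ha)
      ⟨b, hgb.ne', hb⟩
  have hsupp : support g = S := by
    refine (hSg.eq_of_not_ssubset ?_).symm
    have hSne : S.indicator (1 : α → ℝ) ≠ 0 := fun h => by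
      simpa [hS.nonempty.some_mem] using congrFun h hS.nonempty.some
    simpa [support_boxB_mulVec_ssubset_iff, support_indicator] using
      hmin _ hS.incMat_mulVec_indicator hSne
  obtain ⟨a₀, ha₀⟩ := hS.nonempty
  have hconst : ∀ a ∈ S, g a = g a₀ := fun a ha => hS.eq_of_mem_ker hsupp.le hker ha ha₀
  -- `z a₀` divides every coordinate of `z`, hence their gcd `1`.
  have hz₀ : z a₀ = 1 := by
    refine Int.eq_one_of_dvd_one ?_ (hgcd ▸ Finset.dvd_gcd fun a _ => ?_)
    · exact_mod_cast (hz a₀).symm ▸ (hpos a₀ (hsupp ▸ ha₀)).le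
    by_cases ha : a ∈ S
    · rw [show z a = z a₀ from Int.cast_injective (by rw [hz, hz, hconst a ha])]
    · have hga : g a = 0 := notMem_support.1 (hsupp ▸ ha)
      rw [show z a = 0 by exact_mod_cast (hz a).trans hga]
      exact dvd_zero _
  refine ⟨S, hS, funext fun a => ?_⟩
  by_cases ha : a ∈ S
  · rw [indicator_of_mem ha, hconst a ha, ← hz, hz₀, Pi.one_apply, Int.cast_one]
  · rw [indicator_of_notMem ha, ← notMem_support, hsupp]
    exact ha

end DicycleFlow

section WalkFromZero

variable {N α : Type*} [Fintype α] [DecidableEq N] [DecidableEq α] {G : Digraph' N α}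

theorem exists_isSimpleDicycle_compl_of_isCircuitWalk {g : Fin 2 → α → ℝ} {lam : Fin 2 → ℝ}
    (h : IsCircuitWalk (incMat G) 0 (boxB α) (boxd α) 0 1 2 g lam) :
    ∃ S, IsSimpleDicycle G S ∧ IsSimpleDicycle G Sᶜ := by
  obtain ⟨hcirc, hlam, hP₀, -, hsum, hmax₀, -⟩ := isCircuitWalk_two_zero_iff.1 h
  obtain ⟨-, hlo, hup⟩ := inPoly_circulation_iff.1 hP₀
  have hg₀ : 0 ≤ g 0 := (smul_nonneg_iff_nonneg_of_pos_left (hlam 0)).1 hlo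
  have hg₁ : 0 ≤ g 1 := (smul_nonneg_iff_nonneg_of_pos_left (hlam 1)).1 <| by
    rw [eq_sub_of_add_eq' hsum, sub_nonneg]; exact hup
  obtain ⟨S, hS, hgS⟩ := (hcirc 0).exists_isSimpleDicycle_eq_indicator hg₀
  obtain ⟨T, hT, hgT⟩ := (hcirc 1).exists_isSimpleDicycle_eq_indicator hg₁
  obtain ⟨a, ha⟩ := hS.nonempty
  -- maximality of the first step: `1_S` itself still lies in the polytope
  have hlam₀ : lam 0 = 1 := by
    refine le_antisymm ?_ <| not_lt.1 fun hlt =>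
      hmax₀ 1 hlt (by simpa [hgS] using hS.inPoly_indicator)
    simpa [hgS, ha] using hup a
  rw [hgS, hgT, hlam₀, one_smul] at hsum
  exact ⟨S, hS, eq_compl_of_indicator_add_smul_indicator_eq_one hT.nonempty (hlam 1) hsum ▸ hT⟩

theorem exists_isCircuitWalk_isSCDecomp_of_compl {S : Set α} (hS : IsSimpleDicycle G S)
    (hSc : IsSimpleDicycle G Sᶜ) :
    ∃ (g : Fin 2 → α → ℝ) (lam : Fin 2 → ℝ),
      IsCircuitWalk (incMat G) 0 (boxB α) (boxd α) 0 1 2 g lam ∧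
      IsSCDecomp (incMat G) (boxB α) (1 - 0) 2 g lam := by
  have hsum : S.indicator 1 + Sᶜ.indicator 1 = (1 : α → ℝ) := indicator_self_add_compl S 1
  have hcirc : ∀ i, IsCircuit (incMat G) (boxB α) (![S.indicator 1, Sᶜ.indicator 1] i) :=
    Fin.forall_fin_two.2 ⟨hS.isCircuit_indicator, hSc.isCircuit_indicator⟩
  have hnn : ∀ i, 0 ≤ ![S.indicator (1 : α → ℝ), Sᶜ.indicator 1] i :=
    Fin.forall_fin_two.2
      ⟨fun _ => indicator_nonneg (by simp) _, fun _ => indicator_nonneg (by simp) _⟩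
  have hfull : InPoly (incMat G) 0 (boxB α) (boxd α) 1 := by
    rw [← hsum, inPoly_circulation_iff, mulVec_add, hS.incMat_mulVec_indicator,
      hSc.incMat_mulVec_indicator, add_zero, hsum]
    exact ⟨rfl, zero_le_one, le_rfl⟩
  refine ⟨_, 1, isCircuitWalk_two_zero_iff.2 ⟨hcirc, fun _ => one_pos, ?_, ?_, ?_, ?_, ?_⟩,
    hcirc, fun _ => one_pos, ?_, fun i j => signCompat_boxB_of_nonneg (hnn i) (hnn j)⟩
  · simp [hS.inPoly_indicator]
  · simp [hsum, hfull]
  · simp [hsum]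
  · obtain ⟨a, ha⟩ := hS.nonempty
    exact fun mu hmu => not_inPoly_of_one_lt_apply (a := a) (by simpa [ha] using hmu)
  · obtain ⟨a, ha⟩ := hSc.nonempty
    exact fun mu hmu => not_inPoly_of_one_lt_apply (a := a)
      (by simpa [ha, notMem_of_mem_compl ha] using hmu)
  · simp [Fin.sum_univ_two, hsum]

end WalkFromZero

theorem scm_walk_length_two_iff_two_hamiltonian_dicycles_general
    {N α : Type*} [Fintype α] [DecidableEq N] [DecidableEq α]
    (G : Digraph' N α)
    (hdeg : ∀ v : N, inDeg G v = 2 ∧ outDeg G v = 2) :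
    (∃ (g : Fin 2 → α → ℝ) (lam : Fin 2 → ℝ),
        IsCircuitWalk (incMat G) 0 (boxB α) (boxd α) (0 : α → ℝ) (1 : α → ℝ) 2 g lam ∧
        IsSCDecomp (incMat G) (boxB α) ((1 : α → ℝ) - (0 : α → ℝ)) 2 g lam)
      ↔ DecompTwoHamiltonian G := by
  have hout : ∀ v, 1 < outDeg G v := fun v => (hdeg v).2 ▸ one_lt_two
  constructor
  · rintro ⟨g, lam, hwalk, -⟩
    obtain ⟨S, hS, hSc⟩ := exists_isSimpleDicycle_compl_of_isCircuitWalk hwalk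
    exact ⟨S, Sᶜ, hS.isHamiltonianDicycle_of_compl hSc hout,
      hSc.isHamiltonianDicycle_of_compl (by rwa [compl_compl]) hout, disjoint_compl_right,
      union_compl_self S⟩
  · rintro ⟨S₁, S₂, h₁, h₂, hdisj, hcover⟩
    have hS₂ : S₂ = S₁ᶜ := (IsCompl.compl_eq ⟨hdisj, codisjoint_iff.2 hcover⟩).symm
    exact exists_isCircuitWalk_isSCDecomp_of_compl h₁.isSimpleDicycle (hS₂ ▸ h₂.isSimpleDicycle)

/-- For an Eulerian digraph `G` in which every node has in-degree `2` and
out-degree `2`, with `P` the 0/1-circulation polytope of `G`, there is a list of two circuit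
steps that is simultaneously a circuit walk of length `2` from the zero flow to the full flow
and a sign-compatible circuit decomposition of `1 - 0` if and only if `G` decomposes into two
simple Hamiltonian dicycles. -/
theorem scm_walk_length_two_iff_two_hamiltonian_dicycles
    {N α : Type*} [Fintype N] [Fintype α] [DecidableEq N] [DecidableEq α] [Nonempty N]
    (G : Digraph' N α)
    (hdeg : ∀ v : N, inDeg G v = 2 ∧ outDeg G v = 2) :
    (∃ (g : Fin 2 → α → ℝ) (lam : Fin 2 → ℝ),
        IsCircuitWalk (incMat G) 0 (boxB α) (boxd α) (0 : α → ℝ) (1 : α → ℝ) 2 g lam ∧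
        IsSCDecomp (incMat G) (boxB α) ((1 : α → ℝ) - (0 : α → ℝ)) 2 g lam)
      ↔ DecompTwoHamiltonian G :=
  scm_walk_length_two_iff_two_hamiltonian_dicycles_general G hdeg
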